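/- Let H be a real Hilbert space, A : H → H be μ-strongly monotone and L-Lipschitz (0 < μ ≤ L), c : H → H be λ-Lipschitz with λ + √(1 - μ²/L²) < 1 (implying in particular μ² > L²λ(2-λ) when λ < 1), K ⊆ H nonempty closed convex, K(x) := c(x) + K, and γ ≥ 0 with |γ - μ/L²| < √(μ² - L²*λ*(2-λ))/L². Suppose moreover ‖P_{K(x)}(z) - P_{K(y)}(z)‖ ≤ λ‖x - y‖ for all x, y, z. If x*, x** ∈ H both satisfy x ∈ K(x) and x = P_{K(x)}(x - γ • A x), then x* = x**. -/

import Mathlib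

open RealInnerProductSpace Pointwise

theorem stmt_11 {H : Type*} [NormedAddCommGroup H] [InnerProductSpace ℝ H]
    (A : H → H) (μ L lam : ℝ) (hμ : 0 < μ) (hμL : μ ≤ L) (hlam : 0 ≤ lam)
    (hmono : ∀ x y : H, ⟪A x - A y, x - y⟫ ≥ μ * ‖x - y‖ ^ 2)
    (hlip : ∀ x y : H, ‖A x - A y‖ ≤ L * ‖x - y‖)
    (hsolv : lam + Real.sqrt (1 - μ ^ 2 / L ^ 2) < 1)
    (K : Set H) (hK : K.Nonempty) (hKc : IsClosed K) (hKconv : Convex ℝ K)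
    (c : H → H)
    (γ : ℝ) (hγ : 0 ≤ γ)
    (hstep : |γ - μ / L ^ 2| < Real.sqrt (μ ^ 2 - L ^ 2 * lam * (2 - lam)) / L ^ 2)
    (P : H → H → H)
    (hPmem : ∀ x z : H, P x z ∈ c x +ᵥ K)
    (hPchar : ∀ x z : H, ∀ w ∈ c x +ᵥ K, ⟪z - P x z, P x z - w⟫ ≥ 0)
    (hPstab : ∀ x y z : H, ‖P x z - P y z‖ ≤ lam * ‖x - y‖)
    (xs xss : H)
    (hxs : xs ∈ c xs +ᵥ K ∧ xs = P xs (xs - γ • A xs))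
    (hxss : xss ∈ c xss +ᵥ K ∧ xss = P xss (xss - γ • A xss)) :
    xs = xss := by
  obtain ⟨hxs1, hxs2⟩ := hxs
  obtain ⟨hxss1, hxss2⟩ := hxss
  have hL : 0 < L := lt_of_lt_of_le hμ hμL
  have hL2 : (0:ℝ) < L ^ 2 := by positivity
  have hlam1 : lam < 1 := by
    have := Real.sqrt_nonneg (1 - μ ^ 2 / L ^ 2); linarith
  set D := μ ^ 2 - L ^ 2 * lam * (2 - lam) with hD
  have hsD : 0 < Real.sqrt D / L ^ 2 := lt_of_le_of_lt (abs_nonneg _) hstep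
  have hsD' : 0 < Real.sqrt D := by
    have := mul_pos hsD hL2
    rwa [div_mul_cancel₀ _ (ne_of_gt hL2)] at this
  have hDpos : 0 < D := Real.sqrt_pos.mp hsD'
  set β := 1 - 2 * γ * μ + γ ^ 2 * L ^ 2 with hβ
  have hstep2 : (γ - μ / L ^ 2) ^ 2 < D / L ^ 4 := by
    obtain ⟨h1, h2⟩ := abs_lt.mp hstep
    have h3 := sq_lt_sq' h1 h2
    have h4 : (Real.sqrt D / L ^ 2) ^ 2 = D / L ^ 4 := by
      rw [div_pow, Real.sq_sqrt hDpos.le]; ring_nf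
    linarith [h4 ▸ h3]
  have key : (γ * L ^ 2 - μ) ^ 2 < D := by
    have h5 := mul_lt_mul_of_pos_left hstep2 (show (0:ℝ) < L ^ 4 by positivity)
    calc (γ * L ^ 2 - μ) ^ 2 = L ^ 4 * (γ - μ / L ^ 2) ^ 2 := by field_simp
    _ < L ^ 4 * (D / L ^ 4) := h5
    _ = D := by field_simp
  have hβlt : β < (1 - lam) ^ 2 := by nlinarith [key, hL2]
  have hβ0 : 0 ≤ β := by
    nlinarith [sq_nonneg (γ * L ^ 2 - μ), hL2, mul_self_le_mul_self hμ.le hμL]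
  have hsqrt : Real.sqrt β < 1 - lam := by
    rw [Real.sqrt_lt' (by linarith)]; exact hβlt
  set z := xs - γ • A xs with hz
  set w := xss - γ • A xss with hw
  -- nonexpansiveness of P xss
  have h1 := hPchar xss z (P xss w) (hPmem xss w)
  have h2 := hPchar xss w (P xss z) (hPmem xss z)
  have hne : ‖P xss z - P xss w‖ ≤ ‖z - w‖ := by
    have hid : ⟪z - w, P xss z - P xss w⟫ - ‖P xss z - P xss w‖ ^ 2 =
        ⟪z - P xss z, P xss z - P xss w⟫ + ⟪w - P xss w, P xss w - P xss z⟫ := by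
      rw [← real_inner_self_eq_norm_sq]
      simp only [inner_sub_left, inner_sub_right]
      ring
    have hsum : ‖P xss z - P xss w‖ ^ 2 ≤ ⟪z - w, P xss z - P xss w⟫ := by linarith
    nlinarith [real_inner_le_norm (z - w) (P xss z - P xss w),
      norm_nonneg (P xss z - P xss w), norm_nonneg (z - w), hsum]
  -- contraction estimate
  have hcon : ‖z - w‖ ≤ Real.sqrt β * ‖xs - xss‖ := by
    have hzw : z - w = (xs - xss) - γ • (A xs - A xss) := by
      rw [hz, hw, smul_sub]; abel
    have hsq : ‖z - w‖ ^ 2 ≤ β * ‖xs - xss‖ ^ 2 := by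
      rw [hzw, norm_sub_sq_real, real_inner_smul_right, norm_smul, Real.norm_eq_abs,
        abs_of_nonneg hγ, real_inner_comm]
      have hm := hmono xs xss
      have hl := hlip xs xss
      have e1 : γ * (μ * ‖xs - xss‖ ^ 2) ≤ γ * ⟪A xs - A xss, xs - xss⟫ :=
        mul_le_mul_of_nonneg_left hm hγ
      have e2 : ‖A xs - A xss‖ ^ 2 ≤ (L * ‖xs - xss‖) ^ 2 :=
        pow_le_pow_left₀ (norm_nonneg _) hl 2
      have e3 : (γ * ‖A xs - A xss‖) ^ 2 ≤ γ ^ 2 * (L * ‖xs - xss‖) ^ 2 := by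
        calc (γ * ‖A xs - A xss‖) ^ 2 = γ ^ 2 * ‖A xs - A xss‖ ^ 2 := by ring
        _ ≤ γ ^ 2 * (L * ‖xs - xss‖) ^ 2 := mul_le_mul_of_nonneg_left e2 (sq_nonneg γ)
      have e4 : β * ‖xs - xss‖ ^ 2 =
          ‖xs - xss‖ ^ 2 - 2 * (γ * (μ * ‖xs - xss‖ ^ 2)) + γ ^ 2 * (L * ‖xs - xss‖) ^ 2 := by
        rw [hβ]; ring
      rw [e4]
      linarith [e1, e3]
    have h6 := Real.sqrt_le_sqrt hsq
    rwa [Real.sqrt_mul hβ0, Real.sqrt_sq (norm_nonneg _), Real.sqrt_sq (norm_nonneg _)] at h6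
  have keyest : ‖xs - xss‖ ≤ lam * ‖xs - xss‖ + Real.sqrt β * ‖xs - xss‖ := by
    calc ‖xs - xss‖ = ‖P xs z - P xss w‖ := by rw [← hxs2, ← hxss2]
    _ ≤ ‖P xs z - P xss z‖ + ‖P xss z - P xss w‖ := by
        rw [← sub_add_sub_cancel (P xs z) (P xss z) (P xss w)]; exact norm_add_le _ _
    _ ≤ lam * ‖xs - xss‖ + Real.sqrt β * ‖xs - xss‖ :=
        add_le_add (hPstab xs xss z) (le_trans hne hcon)
  have hzero : ‖xs - xss‖ = 0 := by
    rcases eq_or_lt_of_le (norm_nonneg (xs - xss)) with h | h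
    · exact h.symm
    · exfalso
      have h7 := mul_lt_mul_of_pos_right hsqrt h
      linarith [keyest, h7]
  rw [norm_eq_zero, sub_eq_zero] at hzero
  exact hzero
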